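/- Entropy conservation of the EC flux in the z-direction (appendix Corollary). Let left and right ideal MHD states be given (both with ρ > 0, p > 0) and define ρ̂ = ⟨z₁⟩z₅ˡⁿ, û₁ = ⟨z₂⟩/⟨z₁⟩, v̂₁ = ⟨z₃⟩/⟨z₁⟩, ŵ₁ = ⟨z₄⟩/⟨z₁⟩, p̂₁ = ⟨z₅⟩/⟨z₁⟩, p̂₂ = ((γ+1)/(2γ))·z₅ˡⁿ/z₁ˡⁿ + ((γ−1)/(2γ))·⟨z₅⟩/⟨z₁⟩, û₂ = ⟨z₁z₂⟩/⟨z₁²⟩, v̂₂ = ⟨z₁z₃⟩/⟨z₁²⟩, ŵ₂ = ⟨z₁z₄⟩/⟨z₁²⟩, B̂₁ = ⟨z₆⟩, B̂₂ = ⟨z₇⟩, B̂₃ = ⟨z₈⟩. Define h* ∈ ℝ⁸ by h₁* = ρ̂ŵ₁; h₂* = ρ̂û₁ŵ₁ − ⟨z₆z₈⟩; h₃* = ρ̂v̂₁ŵ₁ − ⟨z₇z₈⟩; h₄* = p̂₁ + ρ̂ŵ₁² + (⟨z₆²⟩+⟨z₇²⟩+⟨z₈²⟩)/2 − ⟨z₈²⟩;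 h₅* = γŵ₁p̂₂/(γ−1) + (ρ̂ŵ₁/2)(û₁²+v̂₁²+ŵ₁²) + ŵ₂B̂₁² − û₂B̂₁B̂₃ + ŵ₂B̂₂² − v̂₂B̂₂B̂₃; h₆* = ŵ₂B̂₁ − û₂B̂₃; h₇* = ŵ₂B̂₂ − v̂₂B̂₃; h₈* = 0. Then ⟦v⃗⟧·h* = ⟦ρw⟧ + ⟦ρw‖B⃗‖²/(2p)⟧ − ⟦ρB₃(u⃗·B⃗)/p⟧ + ⟦B₃⟧·(⟨z₁z₂⟩⟨z₆⟩ + ⟨z₁z₃⟩⟨z₇⟩ + ⟨z₁z₄⟩⟨z₈⟩), where the last term is minus the contribution of the paper's Janhunen source term discretization in the z-direction. -/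

import Mathlib

open Real Matrix

/-- An ideal MHD state: density, velocity components, pressure, magnetic field components. -/
structure MHD where
  ρ : ℝ
  u : ℝ
  v : ℝ
  w : ℝ
  p : ℝ
  B1 : ℝ
  B2 : ℝ
  B3 : ℝ

namespace MHD

noncomputable section

/-- ‖u⃗‖² -/
def uSq (S : MHD) : ℝ := S.u ^ 2 + S.v ^ 2 + S.w ^ 2

/-- ‖B⃗‖² -/
def BSq (S : MHD) : ℝ := S.B1 ^ 2 + S.B2 ^ 2 + S.B3 ^ 2

/-- u⃗·B⃗ -/
def uDotB (S : MHD) : ℝ := S.u * S.B1 + S.v * S.B2 + S.w * S.B3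

/-- physical entropy s = ln p − γ ln ρ -/
def ent (γ : ℝ) (S : MHD) : ℝ := Real.log S.p - γ * Real.log S.ρ

/-- total energy density ρe -/
def rhoE (γ : ℝ) (S : MHD) : ℝ := S.p / (γ - 1) + S.ρ * S.uSq / 2 + S.BSq / 2

/-- entropy density U = −ρs/(γ−1) -/
def entU (γ : ℝ) (S : MHD) : ℝ := -(S.ρ * S.ent γ) / (γ - 1)

/-- x-direction entropy flux F = uU -/
def entF (γ : ℝ) (S : MHD) : ℝ := S.u * S.entU γ

/-- the entropy variables v⃗ = U_q -/
def entVar (γ : ℝ) (S : MHD) : Fin 8 → ℝ :=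
  ![(γ - S.ent γ) / (γ - 1) - S.ρ * S.uSq / (2 * S.p),
    S.ρ * S.u / S.p, S.ρ * S.v / S.p, S.ρ * S.w / S.p,
    -(S.ρ / S.p), S.ρ * S.B1 / S.p, S.ρ * S.B2 / S.p, S.ρ * S.B3 / S.p]

/-- x-direction physical flux f⃗ -/
def fluxX (γ : ℝ) (S : MHD) : Fin 8 → ℝ :=
  ![S.ρ * S.u,
    S.ρ * S.u ^ 2 + S.p + S.BSq / 2 - S.B1 ^ 2,
    S.ρ * S.u * S.v - S.B1 * S.B2,
    S.ρ * S.u * S.w - S.B1 * S.B3,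
    S.u * (S.rhoE γ + S.p + S.BSq / 2) - S.B1 * S.uDotB,
    0,
    S.u * S.B2 - S.v * S.B1,
    S.u * S.B3 - S.w * S.B1]

/-- the parameter vector z -/
def z (S : MHD) : Fin 8 → ℝ :=
  ![Real.sqrt (S.ρ / S.p), Real.sqrt (S.ρ / S.p) * S.u, Real.sqrt (S.ρ / S.p) * S.v,
    Real.sqrt (S.ρ / S.p) * S.w, Real.sqrt (S.ρ * S.p), S.B1, S.B2, S.B3]

end

end MHD

noncomputable section

open MHD

/-- logarithmic mean: (x−y)/(ln x − ln y), with the consistent value x when x = y. -/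
def lm (x y : ℝ) : ℝ := if x = y then x else (x - y) / (Real.log x - Real.log y)

/-- arithmetic mean -/
def am (x y : ℝ) : ℝ := (x + y) / 2

/-- ⟨z_i⟩ (note: `zA L R 0` is ⟨z₁⟩, …, `zA L R 7` is ⟨z₈⟩) -/
def zA (L R : MHD) (i : Fin 8) : ℝ := am (L.z i) (R.z i)

/-- ⟨z_i z_j⟩ -/
def zP (L R : MHD) (i j : Fin 8) : ℝ := am (L.z i * L.z j) (R.z i * R.z j)

/-- ⟨z₁z₂⟩⟨z₆⟩ + ⟨z₁z₃⟩⟨z₇⟩ + ⟨z₁z₄⟩⟨z₈⟩, the x-direction source factor -/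
def srcX (L R : MHD) : ℝ :=
  zP L R 0 1 * zA L R 5 + zP L R 0 2 * zA L R 6 + zP L R 0 3 * zA L R 7

/-- the entropy conserving numerical flux of Theorem 1 (x-direction) -/
def ecFlux (γ : ℝ) (L R : MHD) : Fin 8 → ℝ :=
  ![zA L R 1 * lm (L.z 4) (R.z 4),
    zA L R 4 / zA L R 0 + (zA L R 1) ^ 2 * lm (L.z 4) (R.z 4) / zA L R 0
      + (zP L R 5 5 + zP L R 6 6 + zP L R 7 7) / 2 - zP L R 5 5,
    zA L R 1 * zA L R 2 * lm (L.z 4) (R.z 4) / zA L R 0 - zP L R 5 6,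
    zA L R 1 * zA L R 3 * lm (L.z 4) (R.z 4) / zA L R 0 - zP L R 5 7,
    (γ / (γ - 1)) * (zA L R 1 / zA L R 0) *
        (((γ + 1) / (2 * γ)) * lm (L.z 4) (R.z 4) / lm (L.z 0) (R.z 0)
          + ((γ - 1) / (2 * γ)) * (zA L R 4 / zA L R 0))
      + zA L R 1 * lm (L.z 4) (R.z 4) / 2 *
          ((zA L R 1) ^ 2 + (zA L R 2) ^ 2 + (zA L R 3) ^ 2) / (zA L R 0) ^ 2
      + (zA L R 6 / zP L R 0 0) * (zP L R 0 1 * zA L R 6 - zP L R 0 2 * zA L R 5)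
      + (zA L R 7 / zP L R 0 0) * (zP L R 0 1 * zA L R 7 - zP L R 0 3 * zA L R 5),
    0,
    (zP L R 0 1 * zA L R 6 - zP L R 0 2 * zA L R 5) / zP L R 0 0,
    (zP L R 0 1 * zA L R 7 - zP L R 0 3 * zA L R 5) / zP L R 0 0]

end

noncomputable section

open MHD

/-- the entropy conserving numerical flux in the y-direction (appendix Corollary) -/
def ecFluxY (γ : ℝ) (L R : MHD) : Fin 8 → ℝ :=
  let ρh := zA L R 0 * lm (L.z 4) (R.z 4)
  let u1 := zA L R 1 / zA L R 0
  let v1 := zA L R 2 / zA L R 0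
  let w1 := zA L R 3 / zA L R 0
  let p1 := zA L R 4 / zA L R 0
  let p2 := ((γ + 1) / (2 * γ)) * lm (L.z 4) (R.z 4) / lm (L.z 0) (R.z 0)
    + ((γ - 1) / (2 * γ)) * (zA L R 4 / zA L R 0)
  let u2 := zP L R 0 1 / zP L R 0 0
  let v2 := zP L R 0 2 / zP L R 0 0
  let w2 := zP L R 0 3 / zP L R 0 0
  let B1h := zA L R 5
  let B2h := zA L R 6
  let B3h := zA L R 7
  ![ρh * v1,
    ρh * u1 * v1 - zP L R 5 6,
    p1 + ρh * v1 ^ 2 + (zP L R 5 5 + zP L R 6 6 + zP L R 7 7) / 2 - zP L R 6 6,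
    ρh * v1 * w1 - zP L R 6 7,
    γ * v1 * p2 / (γ - 1) + (ρh * v1 / 2) * (u1 ^ 2 + v1 ^ 2 + w1 ^ 2)
      + v2 * B1h ^ 2 - u2 * B1h * B2h + v2 * B3h ^ 2 - w2 * B2h * B3h,
    v2 * B1h - u2 * B2h,
    0,
    v2 * B3h - w2 * B2h]

/-- the entropy conserving numerical flux in the z-direction (appendix Corollary) -/
def ecFluxZ (γ : ℝ) (L R : MHD) : Fin 8 → ℝ :=
  let ρh := zA L R 0 * lm (L.z 4) (R.z 4)
  let u1 := zA L R 1 / zA L R 0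
  let v1 := zA L R 2 / zA L R 0
  let w1 := zA L R 3 / zA L R 0
  let p1 := zA L R 4 / zA L R 0
  let p2 := ((γ + 1) / (2 * γ)) * lm (L.z 4) (R.z 4) / lm (L.z 0) (R.z 0)
    + ((γ - 1) / (2 * γ)) * (zA L R 4 / zA L R 0)
  let u2 := zP L R 0 1 / zP L R 0 0
  let v2 := zP L R 0 2 / zP L R 0 0
  let w2 := zP L R 0 3 / zP L R 0 0
  let B1h := zA L R 5
  let B2h := zA L R 6
  let B3h := zA L R 7
  ![ρh * w1,
    ρh * u1 * w1 - zP L R 5 7,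
    ρh * v1 * w1 - zP L R 6 7,
    p1 + ρh * w1 ^ 2 + (zP L R 5 5 + zP L R 6 6 + zP L R 7 7) / 2 - zP L R 7 7,
    γ * w1 * p2 / (γ - 1) + (ρh * w1 / 2) * (u1 ^ 2 + v1 ^ 2 + w1 ^ 2)
      + w2 * B1h ^ 2 - u2 * B1h * B3h + w2 * B2h ^ 2 - v2 * B2h * B3h,
    w2 * B1h - u2 * B3h,
    w2 * B2h - v2 * B3h,
    0]

end

/-!
In the parameter vector one has `ρ = z₁z₅`, `p = z₅/z₁`, `ρ/p = z₁²`, so every entropy variable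
except the first is a polynomial in `z`; the first contains `s = (1 − γ) ln z₅ − (1 + γ) ln z₁`,
whose jump is `(1 − γ)⟦z₅⟧/z₅ˡⁿ − (1 + γ)⟦z₁⟧/z₁ˡⁿ` by the definition of the logarithmic mean.
This removes every logarithm, and `⟦v⟧·h*` becomes a rational identity in the `z`'s. Splitting
`h*` into its Euler part and its magnetic part, the Euler part contracts to `⟦z₄z₅⟧ = ⟦ρw⟧` (the
choice of `p̂₂` cancels the logarithmic-mean terms). In the magnetic part the denominators `⟨z₁²⟩`
of `û₂, v̂₂, ŵ₂` cancel against `⟦z₁²B⟧ = ⟨z₁²⟩⟦B⟧ + ⟦z₁²⟧⟨B⟩`, leaving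
`⟦ρw‖B‖²/(2p)⟧ − ⟦ρB₃(u·B)/p⟧` plus `⟦B₃⟧` times the source factor.
-/

theorem lm_pos {x y : ℝ} (hx : 0 < x) (hy : 0 < y) : 0 < lm x y := by
  unfold lm
  split_ifs with h
  · exact hx
  rcases lt_or_gt_of_ne h with hlt | hgt
  · exact div_pos_of_neg_of_neg (by linarith) (by linarith [Real.log_lt_log hx hlt])
  · exact div_pos (by linarith) (by linarith [Real.log_lt_log hy hgt])

theorem log_sub_log_eq_div_lm {x y : ℝ} (hx : 0 < x) (hy : 0 < y) :
    Real.log y - Real.log x = (y - x) / lm x y := by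
  rw [eq_div_iff (lm_pos hx hy).ne']
  unfold lm
  split_ifs with h
  · simp [h]
  have hlog : Real.log x - Real.log y ≠ 0 :=
    sub_ne_zero.mpr fun hl => h (Real.log_injOn_pos (Set.mem_Ioi.mpr hx) (Set.mem_Ioi.mpr hy) hl)
  field_simp
  ring

namespace MHD

variable {S : MHD}

theorem z_zero_pos (hρ : 0 < S.ρ) (hp : 0 < S.p) : 0 < S.z 0 :=
  Real.sqrt_pos.mpr (div_pos hρ hp)

theorem z_four_pos (hρ : 0 < S.ρ) (hp : 0 < S.p) : 0 < S.z 4 :=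
  Real.sqrt_pos.mpr (mul_pos hρ hp)

theorem z_zero_mul_z_four (hρ : 0 < S.ρ) (hp : 0 < S.p) : S.z 0 * S.z 4 = S.ρ := by
  change √(S.ρ / S.p) * √(S.ρ * S.p) = S.ρ
  rw [← Real.sqrt_mul (div_pos hρ hp).le, show S.ρ / S.p * (S.ρ * S.p) = S.ρ ^ 2 by field_simp,
    Real.sqrt_sq hρ.le]

theorem z_four_div_z_zero (hρ : 0 < S.ρ) (hp : 0 < S.p) : S.z 4 / S.z 0 = S.p := by
  change √(S.ρ * S.p) / √(S.ρ / S.p) = S.p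
  rw [← Real.sqrt_div (mul_pos hρ hp).le, show S.ρ * S.p / (S.ρ / S.p) = S.p ^ 2 by field_simp,
    Real.sqrt_sq hp.le]

theorem z_eq_vec :
    S.z = ![S.z 0, S.z 0 * S.u, S.z 0 * S.v, S.z 0 * S.w, S.z 4, S.B1, S.B2, S.B3] := by
  ext i; fin_cases i <;> rfl

end MHD

noncomputable section

/-- The entropy variables in terms of the parameter vector, via `ρ = z₁z₅` and `p = z₅/z₁`. -/
def paramEntVar (γ : ℝ) (x : Fin 8 → ℝ) : Fin 8 → ℝ :=
  ![(γ + (γ - 1) * Real.log (x 4) + (γ + 1) * Real.log (x 0)) / (γ - 1)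
      - (x 1 ^ 2 + x 2 ^ 2 + x 3 ^ 2) / 2,
    x 0 * x 1, x 0 * x 2, x 0 * x 3, -x 0 ^ 2, x 0 ^ 2 * x 5, x 0 ^ 2 * x 6, x 0 ^ 2 * x 7]

/-- The entropy flux potential `ψ = v·g − wU = ρw + ρw‖B‖²/(2p) − ρB₃(u·B)/p` of the z-flux `g`,
in terms of the parameter vector. -/
def paramEntPotZ (x : Fin 8 → ℝ) : ℝ :=
  x 3 * x 4 + x 0 * x 3 * (x 5 ^ 2 + x 6 ^ 2 + x 7 ^ 2) / 2
    - x 0 * x 7 * (x 1 * x 5 + x 2 * x 6 + x 3 * x 7)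

end

open MHD

theorem entVar_eq_paramEntVar (γ : ℝ) {S : MHD} (hρ : 0 < S.ρ) (hp : 0 < S.p) :
    S.entVar γ = paramEntVar γ S.z := by
  have h0 := (z_zero_pos hρ hp).ne'
  have h4 := (z_four_pos hρ hp).ne'
  have hent : S.ent γ = (1 - γ) * Real.log (S.z 4) - (1 + γ) * Real.log (S.z 0) := by
    rw [ent, ← z_four_div_z_zero hρ hp, ← z_zero_mul_z_four hρ hp, Real.log_div h4 h0,
      Real.log_mul h0 h4]
    ring
  unfold entVar
  rw [hent, z_eq_vec, ← z_zero_mul_z_four hρ hp, ← z_four_div_z_zero hρ hp]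
  ext i
  fin_cases i <;>
    simp only [paramEntVar, uSq, Fin.isValue, Fin.zero_eta, Fin.mk_one,
      Fin.reduceFinMk, cons_val, cons_val_zero, cons_val_one] <;>
    field_simp
  ring

theorem paramEntPotZ_z {S : MHD} (hρ : 0 < S.ρ) (hp : 0 < S.p) :
    paramEntPotZ S.z =
      S.ρ * S.w + S.ρ * S.w * S.BSq / (2 * S.p) - S.ρ * S.B3 * S.uDotB / S.p := by
  have h0 := (z_zero_pos hρ hp).ne'
  have h4 := (z_four_pos hρ hp).ne'
  rw [z_eq_vec, ← z_zero_mul_z_four hρ hp, ← z_four_div_z_zero hρ hp]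
  simp only [paramEntPotZ, BSq, uDotB, Fin.isValue, cons_val, cons_val_zero, cons_val_one]
  field_simp

theorem paramEntVar_zero_sub {γ : ℝ} (hγ : γ ≠ 1) {x y : Fin 8 → ℝ}
    (hx0 : 0 < x 0) (hy0 : 0 < y 0) (hx4 : 0 < x 4) (hy4 : 0 < y 4) :
    paramEntVar γ y 0 - paramEntVar γ x 0 =
      (y 4 - x 4) / lm (x 4) (y 4) + (γ + 1) / (γ - 1) * ((y 0 - x 0) / lm (x 0) (y 0))
        - ((y 1 ^ 2 - x 1 ^ 2) + (y 2 ^ 2 - x 2 ^ 2) + (y 3 ^ 2 - x 3 ^ 2)) / 2 := by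
  have hγ' : γ - 1 ≠ 0 := sub_ne_zero.mpr hγ
  simp only [paramEntVar, cons_val_zero, ← log_sub_log_eq_div_lm hx0 hy0,
    ← log_sub_log_eq_div_lm hx4 hy4]
  field_simp
  ring

noncomputable section

def eulerFluxZ (γ : ℝ) (L R : MHD) : Fin 8 → ℝ :=
  let ρh := zA L R 0 * lm (L.z 4) (R.z 4)
  let u1 := zA L R 1 / zA L R 0
  let v1 := zA L R 2 / zA L R 0
  let w1 := zA L R 3 / zA L R 0
  let p1 := zA L R 4 / zA L R 0
  let p2 := ((γ + 1) / (2 * γ)) * lm (L.z 4) (R.z 4) / lm (L.z 0) (R.z 0)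
    + ((γ - 1) / (2 * γ)) * (zA L R 4 / zA L R 0)
  ![ρh * w1, ρh * u1 * w1, ρh * v1 * w1, p1 + ρh * w1 ^ 2,
    γ * w1 * p2 / (γ - 1) + (ρh * w1 / 2) * (u1 ^ 2 + v1 ^ 2 + w1 ^ 2), 0, 0, 0]

def magFluxZ (L R : MHD) : Fin 8 → ℝ :=
  let u2 := zP L R 0 1 / zP L R 0 0
  let v2 := zP L R 0 2 / zP L R 0 0
  let w2 := zP L R 0 3 / zP L R 0 0
  let B1h := zA L R 5
  let B2h := zA L R 6
  let B3h := zA L R 7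
  ![0, -zP L R 5 7, -zP L R 6 7, (zP L R 5 5 + zP L R 6 6 + zP L R 7 7) / 2 - zP L R 7 7,
    w2 * B1h ^ 2 - u2 * B1h * B3h + w2 * B2h ^ 2 - v2 * B2h * B3h,
    w2 * B1h - u2 * B3h, w2 * B2h - v2 * B3h, 0]

end

theorem ecFluxZ_eq_eulerFluxZ_add_magFluxZ (γ : ℝ) (L R : MHD) :
    ecFluxZ γ L R = eulerFluxZ γ L R + magFluxZ L R := by
  ext i
  fin_cases i <;>
    simp only [ecFluxZ, eulerFluxZ, magFluxZ, Pi.add_apply, Fin.isValue, Fin.zero_eta, Fin.mk_one,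
      Fin.reduceFinMk, cons_val, cons_val_zero, cons_val_one] <;>
    ring

theorem sum_jump_paramEntVar_mul_eulerFluxZ {γ : ℝ} (hγ0 : γ ≠ 0) (hγ1 : γ ≠ 1) {L R : MHD}
    (hL0 : 0 < L.z 0) (hR0 : 0 < R.z 0) (hL4 : 0 < L.z 4) (hR4 : 0 < R.z 4) :
    ∑ i, (paramEntVar γ R.z i - paramEntVar γ L.z i) * eulerFluxZ γ L R i =
      R.z 3 * R.z 4 - L.z 3 * L.z 4 := by
  have hγ' : γ - 1 ≠ 0 := sub_ne_zero.mpr hγ1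
  have hM0 := (lm_pos hL0 hR0).ne'
  have hM4 := (lm_pos hL4 hR4).ne'
  have hA0 : L.z 0 + R.z 0 ≠ 0 := by positivity
  rw [Fin.sum_univ_eight, paramEntVar_zero_sub hγ1 hL0 hR0 hL4 hR4]
  simp only [paramEntVar, eulerFluxZ, Fin.isValue, cons_val, cons_val_zero, cons_val_one,
    mul_zero, add_zero]
  unfold zA am
  field_simp
  ring

theorem sum_jump_paramEntVar_mul_magFluxZ (γ : ℝ) {L R : MHD} (h : zP L R 0 0 ≠ 0) :
    ∑ i, (paramEntVar γ R.z i - paramEntVar γ L.z i) * magFluxZ L R i =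
      (R.z 0 * R.z 3 * (R.z 5 ^ 2 + R.z 6 ^ 2 + R.z 7 ^ 2) / 2
        - L.z 0 * L.z 3 * (L.z 5 ^ 2 + L.z 6 ^ 2 + L.z 7 ^ 2) / 2)
      - (R.z 0 * R.z 7 * (R.z 1 * R.z 5 + R.z 2 * R.z 6 + R.z 3 * R.z 7)
        - L.z 0 * L.z 7 * (L.z 1 * L.z 5 + L.z 2 * L.z 6 + L.z 3 * L.z 7))
      + (R.z 7 - L.z 7) * srcX L R := by
  rw [Fin.sum_univ_eight]
  simp only [paramEntVar, magFluxZ, srcX, Fin.isValue, cons_val, cons_val_zero, cons_val_one,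
    mul_zero, zero_add, add_zero]
  field_simp
  unfold zP zA am
  ring

theorem sum_jump_paramEntVar_mul_ecFluxZ {γ : ℝ} (hγ0 : γ ≠ 0) (hγ1 : γ ≠ 1) {L R : MHD}
    (hL0 : 0 < L.z 0) (hR0 : 0 < R.z 0) (hL4 : 0 < L.z 4) (hR4 : 0 < R.z 4) :
    ∑ i, (paramEntVar γ R.z i - paramEntVar γ L.z i) * ecFluxZ γ L R i =
      paramEntPotZ R.z - paramEntPotZ L.z + (R.z 7 - L.z 7) * srcX L R := by
  have hP : zP L R 0 0 ≠ 0 := by unfold zP am; positivity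
  simp only [ecFluxZ_eq_eulerFluxZ_add_magFluxZ, Pi.add_apply, mul_add, Finset.sum_add_distrib,
    sum_jump_paramEntVar_mul_eulerFluxZ hγ0 hγ1 hL0 hR0 hL4 hR4,
    sum_jump_paramEntVar_mul_magFluxZ γ hP]
  unfold paramEntPotZ
  ring

open MHD in
/-- entropy conservation of the EC flux in the z-direction:
⟦v⃗⟧·h* = ⟦ρw⟧ + ⟦ρw‖B⃗‖²/(2p)⟧ − ⟦ρB₃(u⃗·B⃗)/p⟧ + ⟦B₃⟧·(⟨z₁z₂⟩⟨z₆⟩ + ⟨z₁z₃⟩⟨z₇⟩ + ⟨z₁z₄⟩⟨z₈⟩). -/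
theorem ec_flux_entropy_conservation_z (γ : ℝ) (hγ : 1 < γ) (L R : MHD)
    (hρL : 0 < L.ρ) (hpL : 0 < L.p) (hρR : 0 < R.ρ) (hpR : 0 < R.p) :
    (∑ i : Fin 8, (R.entVar γ i - L.entVar γ i) * ecFluxZ γ L R i) =
      (R.ρ * R.w - L.ρ * L.w)
      + (R.ρ * R.w * R.BSq / (2 * R.p) - L.ρ * L.w * L.BSq / (2 * L.p))
      - (R.ρ * R.B3 * R.uDotB / R.p - L.ρ * L.B3 * L.uDotB / L.p)
      + (R.B3 - L.B3) * srcX L R := by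
  rw [entVar_eq_paramEntVar γ hρL hpL, entVar_eq_paramEntVar γ hρR hpR,
    sum_jump_paramEntVar_mul_ecFluxZ (zero_lt_one.trans hγ).ne' hγ.ne' (z_zero_pos hρL hpL)
      (z_zero_pos hρR hpR) (z_four_pos hρL hpL) (z_four_pos hρR hpR),
    paramEntPotZ_z hρL hpL, paramEntPotZ_z hρR hpR]
  change _ + (R.B3 - L.B3) * _ = _
  ring
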